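/- A quasilinear map Ω: X ↷ Y is bounded if and only if Dom Ω = X, and if and only if Ran Ω = Y. Consequently, Ω is bounded if and only if Ω⁻¹ is bounded. -/

import Mathlib

noncomputable section

open scoped Classical BigOperators

section Defs

variable {X Y S : Type*} [NormedAddCommGroup X] [NormedSpace ℝ X]
  [NormedAddCommGroup Y] [NormedSpace ℝ Y] [AddCommGroup S] [Module ℝ S]

/-- The norm of `σ ∈ S` viewed as an element of `Y` through the embedding `ι`
(junk value `0` if `σ` is not in the image of `Y`). -/
noncomputable def Ynorm (ι : Y →ₗ[ℝ] S) (σ : S) : ℝ :=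
  if h : ∃ y : Y, ι y = σ then ‖Classical.choose h‖ else 0

/-- `Ω : X ↷ Y` is quasilinear with ambient space `S` and constant `C`. -/
def IsQL (ι : Y →ₗ[ℝ] S) (Ω : X → S) (C : ℝ) : Prop :=
  (∀ (c : ℝ) (x : X), Ω (c • x) = c • Ω x) ∧
  ∀ x z : X, (∃ y : Y, ι y = Ω (x + z) - Ω x - Ω z) ∧
    Ynorm ι (Ω (x + z) - Ω x - Ω z) ≤ C * (‖x‖ + ‖z‖)

/-- `Ω : X ↷ Y` is `1`-quasilinear with ambient space `S` and constant `C`. -/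
def IsOneQL (ι : Y →ₗ[ℝ] S) (Ω : X → S) (C : ℝ) : Prop :=
  (∀ (c : ℝ) (x : X), Ω (c • x) = c • Ω x) ∧
  ∀ (n : ℕ) (f : Fin n → X),
    (∃ y : Y, ι y = Ω (∑ i, f i) - ∑ i, Ω (f i)) ∧
      Ynorm ι (Ω (∑ i, f i) - ∑ i, Ω (f i)) ≤ C * ∑ i, ‖f i‖

/-- The twisted sum `Y ⊕_Ω X = {(β, x) : β - Ωx ∈ Y}`, as a subset of `S × X`. -/
def TwSum (ι : Y →ₗ[ℝ] S) (Ω : X → S) : Set (S × X) :=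
  {p | ∃ y : Y, ι y = p.1 - Ω p.2}

/-- The quasinorm `‖(β, x)‖_Ω = ‖β - Ωx‖_Y + ‖x‖_X` of the twisted sum. -/
noncomputable def tnorm (ι : Y →ₗ[ℝ] S) (Ω : X → S) (p : S × X) : ℝ :=
  Ynorm ι (p.1 - Ω p.2) + ‖p.2‖

/-- `Dom Ω = {x ∈ X : Ωx ∈ Y}`. -/
def QDom (ι : Y →ₗ[ℝ] S) (Ω : X → S) : Set X :=
  {x | ∃ y : Y, ι y = Ω x}

/-- `‖x‖_D = ‖x‖_X + ‖Ωx‖_Y`. -/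
noncomputable def domNorm (ι : Y →ₗ[ℝ] S) (Ω : X → S) (x : X) : ℝ :=
  ‖x‖ + Ynorm ι (Ω x)

/-- `Ran Ω = {β ∈ S : ∃ x ∈ X, β - Ωx ∈ Y}`. -/
def QRan (ι : Y →ₗ[ℝ] S) (Ω : X → S) : Set S :=
  {σ | ∃ x : X, (σ, x) ∈ TwSum ι Ω}

/-- `‖β‖_R = inf {‖(β, x)‖_Ω : (β, x) ∈ Y ⊕_Ω X}`. -/
noncomputable def ranNorm (ι : Y →ₗ[ℝ] S) (Ω : X → S) (σ : S) : ℝ :=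
  sInf (tnorm ι Ω '' {p : S × X | p.1 = σ ∧ p ∈ TwSum ι Ω})

theorem Ynorm_iota (ι : Y →ₗ[ℝ] S) (hinj : Function.Injective ι) (y : Y) :
    Ynorm ι (ι y) = ‖y‖ := by
  have h : ∃ y' : Y, ι y' = ι y := ⟨y, rfl⟩
  rw [Ynorm, dif_pos h]
  congr 1
  exact hinj (Classical.choose_spec h)

theorem Ynorm_nonneg (ι : Y →ₗ[ℝ] S) (σ : S) : 0 ≤ Ynorm ι σ := by
  rw [Ynorm]
  split
  · exact norm_nonneg _
  · exact le_refl 0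

end Defs

theorem aux_main {X Y S : Type*} [NormedAddCommGroup X] [NormedSpace ℝ X] [CompleteSpace X]
    [NormedAddCommGroup Y] [NormedSpace ℝ Y] [CompleteSpace Y]
    [AddCommGroup S] [Module ℝ S]
    (ι : Y →ₗ[ℝ] S) (hinj : Function.Injective ι)
    (Ω : X → S) (C : ℝ) (hq : IsQL ι Ω C)
    (T : X → Y) (hT : ∀ x, ι (T x) = Ω x)
    (hzero : ∀ γ : Y, (∀ ε : ℝ, 0 < ε → ∃ x : X, ‖γ - T x‖ + ‖x‖ ≤ ε) → γ = 0) :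
    ∃ D : ℝ, ∀ x, ‖T x‖ ≤ D * ‖x‖ := by
  classical
  obtain ⟨C', hC'eq⟩ : ∃ c : ℝ, c = max C 0 := ⟨_, rfl⟩
  have hC' : 0 ≤ C' := by rw [hC'eq]; exact le_max_right _ _
  have hCC : C ≤ C' := by rw [hC'eq]; exact le_max_left _ _
  have hhom : ∀ (c : ℝ) (x : X), T (c • x) = c • T x := by
    intro c x
    apply hinj
    rw [hT, map_smul, hT, hq.1]
  have hT0 : T 0 = 0 := by
    have := hhom 0 0
    simpa using this
  have hdef : ∀ a b : X, ‖T (a + b) - T a - T b‖ ≤ C' * (‖a‖ + ‖b‖) := by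
    intro a b
    obtain ⟨⟨y, hy⟩, hb⟩ := hq.2 a b
    have heq : Ω (a + b) - Ω a - Ω b = ι (T (a + b) - T a - T b) := by
      rw [map_sub, map_sub, hT, hT, hT]
    rw [heq, Ynorm_iota ι hinj] at hb
    calc ‖T (a + b) - T a - T b‖ ≤ C * (‖a‖ + ‖b‖) := hb
      _ ≤ C' * (‖a‖ + ‖b‖) :=
          mul_le_mul_of_nonneg_right hCC (by positivity)
  haveI : Nonempty X := ⟨0⟩
  have hcover : (⋃ n : ℕ, closure {x : X | ‖x‖ + ‖T x‖ ≤ (n : ℝ)}) = Set.univ := by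
    apply Set.eq_univ_of_forall
    intro x
    refine Set.mem_iUnion.2 ⟨⌈‖x‖ + ‖T x‖⌉₊, subset_closure ?_⟩
    show ‖x‖ + ‖T x‖ ≤ ((⌈‖x‖ + ‖T x‖⌉₊ : ℕ) : ℝ)
    exact Nat.le_ceil _
  obtain ⟨N, hN⟩ := nonempty_interior_of_iUnion_of_closed
    (fun n : ℕ => isClosed_closure) hcover
  obtain ⟨x₀, hx₀⟩ := hN
  obtain ⟨ε, hε, hball⟩ := Metric.isOpen_iff.1 isOpen_interior x₀ hx₀
  have hball' : Metric.ball x₀ ε ⊆ closure {x : X | ‖x‖ + ‖T x‖ ≤ (N : ℝ)} :=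
    hball.trans interior_subset
  have hDnorm : ∀ u v : X, ‖u‖ + ‖T u‖ ≤ (N : ℝ) → ‖v‖ + ‖T v‖ ≤ (N : ℝ) →
      ‖u - v‖ + ‖T (u - v)‖ ≤ (4 + 3 * C') * N := by
    intro u v hu hv
    have h1 : ‖T u - T (u - v) - T v‖ ≤ C' * (‖u - v‖ + ‖v‖) := by
      have h := hdef (u - v) v
      rwa [sub_add_cancel] at h
    have h2 := norm_sub_le (T u - T v) (T u - T (u - v) - T v)
    have he2 : (T u - T v) - (T u - T (u - v) - T v) = T (u - v) := by abel
    rw [he2] at h2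
    have h3 : ‖u - v‖ ≤ ‖u‖ + ‖v‖ := norm_sub_le _ _
    have h4 : ‖T u - T v‖ ≤ ‖T u‖ + ‖T v‖ := norm_sub_le _ _
    have h5 : ‖u‖ ≤ (N : ℝ) := by have := norm_nonneg (T u); linarith
    have h6 : ‖v‖ ≤ (N : ℝ) := by have := norm_nonneg (T v); linarith
    have h7 : C' * (‖u - v‖ + ‖v‖) ≤ C' * (3 * N) :=
      mul_le_mul_of_nonneg_left (by linarith) hC'
    have h8 : ‖T u‖ ≤ (N : ℝ) := by have := norm_nonneg u; linarith
    have h9 : ‖T v‖ ≤ (N : ℝ) := by have := norm_nonneg v; linarith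
    nlinarith
  obtain ⟨B, hBeq⟩ : ∃ b : ℝ, b = (4 + 3 * C') * N * (2 / ε) := ⟨_, rfl⟩
  have hB : 0 ≤ B := by rw [hBeq]; positivity
  have apx : ∀ z : X, ∀ δ : ℝ, 0 < δ →
      ∃ w : X, ‖z - w‖ ≤ δ ∧ ‖w‖ + ‖T w‖ ≤ B * ‖z‖ := by
    intro z δ hδ
    by_cases hz : z = 0
    · subst hz
      exact ⟨0, by simp [hδ.le], by simp [hT0]⟩
    · have hzn : 0 < ‖z‖ := norm_pos_iff.2 hz
      obtain ⟨s, hs⟩ : ∃ s : ℝ, s = (ε / 2) / ‖z‖ := ⟨_, rfl⟩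
      have hs0 : 0 < s := by rw [hs]; positivity
      have hz' : ‖s • z‖ = ε / 2 := by
        rw [norm_smul, Real.norm_eq_abs, abs_of_pos hs0, hs]
        field_simp
      have hm1 : x₀ + s • z ∈ closure {x : X | ‖x‖ + ‖T x‖ ≤ (N : ℝ)} := by
        apply hball'
        rw [Metric.mem_ball, dist_eq_norm]
        simp only [add_sub_cancel_left]
        rw [hz']; linarith
      have hm2 : x₀ ∈ closure {x : X | ‖x‖ + ‖T x‖ ≤ (N : ℝ)} :=
        hball' (Metric.mem_ball_self hε)
      obtain ⟨u, hu, hud⟩ := Metric.mem_closure_iff.1 hm1 (s * δ / 2) (by positivity)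
      obtain ⟨v, hv, hvd⟩ := Metric.mem_closure_iff.1 hm2 (s * δ / 2) (by positivity)
      have hu' : ‖u‖ + ‖T u‖ ≤ (N : ℝ) := hu
      have hv' : ‖v‖ + ‖T v‖ ≤ (N : ℝ) := hv
      refine ⟨s⁻¹ • (u - v), ?_, ?_⟩
      · have he : z - s⁻¹ • (u - v) = s⁻¹ • (s • z - (u - v)) := by
          rw [smul_sub s⁻¹ (s • z) (u - v), smul_smul, inv_mul_cancel₀ hs0.ne', one_smul]
        have he2 : s • z - (u - v) = ((x₀ + s • z) - u) - (x₀ - v) := by abel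
        rw [he, norm_smul, Real.norm_eq_abs, abs_of_pos (inv_pos.2 hs0), he2]
        have hd1 : ‖(x₀ + s • z) - u‖ < s * δ / 2 := by rwa [dist_eq_norm] at hud
        have hd2 : ‖x₀ - v‖ < s * δ / 2 := by rwa [dist_eq_norm] at hvd
        have ht : ‖((x₀ + s • z) - u) - (x₀ - v)‖ ≤ ‖(x₀ + s • z) - u‖ + ‖x₀ - v‖ :=
          norm_sub_le _ _
        have h : s⁻¹ * ‖((x₀ + s • z) - u) - (x₀ - v)‖ ≤ s⁻¹ * (s * δ) := by
          apply mul_le_mul_of_nonneg_left _ (inv_pos.2 hs0).le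
          linarith
        rw [inv_mul_cancel_left₀ hs0.ne'] at h
        exact h
      · have hTsm : T (s⁻¹ • (u - v)) = s⁻¹ • T (u - v) := hhom _ _
        rw [hTsm, norm_smul, norm_smul, Real.norm_eq_abs, abs_of_pos (inv_pos.2 hs0)]
        have hM := hDnorm u v hu' hv'
        have h : s⁻¹ * ‖u - v‖ + s⁻¹ * ‖T (u - v)‖ ≤ s⁻¹ * ((4 + 3 * C') * N) := by
          rw [← mul_add]
          exact mul_le_mul_of_nonneg_left hM (inv_pos.2 hs0).le
        have hsinv : s⁻¹ = ‖z‖ * (2 / ε) := by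
          rw [hs]; field_simp
        calc s⁻¹ * ‖u - v‖ + s⁻¹ * ‖T (u - v)‖ ≤ s⁻¹ * ((4 + 3 * C') * N) := h
          _ = B * ‖z‖ := by rw [hsinv, hBeq]; ring
  -- main estimate
  obtain ⟨c, hc⟩ : ∃ c : ℝ, c = B + C' * (B + 1) := ⟨_, rfl⟩
  have hc0 : 0 ≤ c := by rw [hc]; positivity
  refine ⟨2 * c, fun x => ?_⟩
  have apx2 : ∀ z : X, ∃ w : X, ‖z - w‖ ≤ ‖z‖ / 2 ∧ ‖w‖ + ‖T w‖ ≤ B * ‖z‖ := by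
    intro z
    by_cases hz : z = 0
    · subst hz
      exact ⟨0, by simp, by simp [hT0]⟩
    · exact apx z (‖z‖ / 2) (half_pos (norm_pos_iff.2 hz))
  choose f hf1 hf2 using apx2
  obtain ⟨r, hr0, hrs⟩ : ∃ r : ℕ → X, r 0 = x ∧ ∀ n, r (n + 1) = r n - f (r n) :=
    ⟨fun n => (fun z => z - f z)^[n] x, rfl, fun n => Function.iterate_succ_apply' _ _ _⟩
  have hrn : ∀ n, ‖r n‖ ≤ (1 / 2) ^ n * ‖x‖ := by
    intro n
    induction n with
    | zero => simp [hr0]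
    | succ n ih =>
      rw [hrs]
      calc ‖r n - f (r n)‖ ≤ ‖r n‖ / 2 := hf1 (r n)
        _ ≤ ((1 / 2) ^ n * ‖x‖) / 2 := by linarith
        _ = (1 / 2) ^ (n + 1) * ‖x‖ := by ring
  have hstep : ∀ n, ‖T (r n) - T (r (n + 1))‖ ≤ c * ‖x‖ * (1 / 2) ^ n := by
    intro n
    have h1 : ‖T (r n) - T (f (r n)) - T (r (n + 1))‖ ≤ C' * (‖f (r n)‖ + ‖r (n + 1)‖) := by
      have h := hdef (f (r n)) (r (n + 1))
      have he : f (r n) + r (n + 1) = r n := by rw [hrs]; abel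
      rwa [he] at h
    have h2 := hf2 (r n)
    have h3 : ‖r (n + 1)‖ ≤ ‖r n‖ / 2 := by rw [hrs]; exact hf1 (r n)
    have h4 := hrn n
    have h5 : ‖T (r n) - T (r (n + 1))‖ ≤
        ‖T (f (r n))‖ + ‖T (r n) - T (f (r n)) - T (r (n + 1))‖ := by
      have := norm_add_le (T (f (r n))) (T (r n) - T (f (r n)) - T (r (n + 1)))
      have he : T (f (r n)) + (T (r n) - T (f (r n)) - T (r (n + 1)))
          = T (r n) - T (r (n + 1)) := by abel
      rwa [he] at this
    have h6 : ‖f (r n)‖ ≤ B * ‖r n‖ := by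
      have := norm_nonneg (T (f (r n))); linarith
    have h7 : ‖T (f (r n))‖ ≤ B * ‖r n‖ := by
      have := norm_nonneg (f (r n)); linarith
    have h8 : C' * (‖f (r n)‖ + ‖r (n + 1)‖) ≤ C' * ((B + 1) * ‖r n‖) := by
      apply mul_le_mul_of_nonneg_left _ hC'
      have := norm_nonneg (r n); linarith
    have h9 : ‖T (r n) - T (r (n + 1))‖ ≤ c * ‖r n‖ := by
      have hce : c * ‖r n‖ = B * ‖r n‖ + C' * ((B + 1) * ‖r n‖) := by rw [hc]; ring
      linarith
    have h10 : c * ‖r n‖ ≤ c * ((1 / 2) ^ n * ‖x‖) :=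
      mul_le_mul_of_nonneg_left h4 hc0
    calc ‖T (r n) - T (r (n + 1))‖ ≤ c * ((1 / 2) ^ n * ‖x‖) := le_trans h9 h10
      _ = c * ‖x‖ * (1 / 2) ^ n := by ring
  have hcau : CauchySeq (fun n => T (r n)) := by
    apply cauchySeq_of_le_geometric (1 / 2) (c * ‖x‖) (by norm_num)
    intro n
    rw [dist_eq_norm]
    exact hstep n
  obtain ⟨γ, hγ⟩ := cauchySeq_tendsto_of_complete hcau
  have htel : ∀ n, ‖T x - T (r n)‖ ≤ 2 * c * ‖x‖ - 2 * c * ‖x‖ * (1 / 2) ^ n := by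
    intro n
    induction n with
    | zero => simp [hr0]
    | succ n ih =>
      have h := hstep n
      have tri : ‖T x - T (r (n + 1))‖ ≤ ‖T x - T (r n)‖ + ‖T (r n) - T (r (n + 1))‖ := by
        have hh := norm_add_le (T x - T (r n)) (T (r n) - T (r (n + 1)))
        have he : (T x - T (r n)) + (T (r n) - T (r (n + 1))) = T x - T (r (n + 1)) := by abel
        rwa [he] at hh
      have hring : (2 * c * ‖x‖ - 2 * c * ‖x‖ * (1 / 2) ^ n) + c * ‖x‖ * (1 / 2) ^ n
          = 2 * c * ‖x‖ - 2 * c * ‖x‖ * (1 / 2) ^ (n + 1) := by ring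
      linarith
  have hrlim : Filter.Tendsto r Filter.atTop (nhds 0) := by
    apply squeeze_zero_norm hrn
    have := (tendsto_pow_atTop_nhds_zero_of_lt_one (by norm_num : (0:ℝ) ≤ 1 / 2)
      (by norm_num)).mul_const ‖x‖
    simpa using this
  have hγ0 : γ = 0 := by
    apply hzero
    intro ε' hε'
    have a1 : Filter.Tendsto (fun n => γ - T (r n)) Filter.atTop (nhds 0) := by
      have := hγ.const_sub γ
      simpa using this
    have t1 : Filter.Tendsto (fun n => ‖γ - T (r n)‖ + ‖r n‖) Filter.atTop (nhds 0) := by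
      have := Filter.Tendsto.add a1.norm hrlim.norm
      simpa using this
    obtain ⟨n, hn⟩ := (t1.eventually (gt_mem_nhds hε')).exists
    exact ⟨r n, hn.le⟩
  have hTr0 : Filter.Tendsto (fun n => ‖T (r n)‖) Filter.atTop (nhds 0) := by
    rw [hγ0] at hγ
    simpa using hγ.norm
  have hub : ∀ n, ‖T x‖ ≤ 2 * c * ‖x‖ + ‖T (r n)‖ := by
    intro n
    have h := htel n
    have tri : ‖T x‖ ≤ ‖T x - T (r n)‖ + ‖T (r n)‖ := by
      have hh := norm_add_le (T x - T (r n)) (T (r n))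
      have he : (T x - T (r n)) + T (r n) = T x := by abel
      rwa [he] at hh
    have hp : (0:ℝ) ≤ 2 * c * ‖x‖ * (1 / 2) ^ n := by positivity
    linarith
  have hlim : Filter.Tendsto (fun n => 2 * c * ‖x‖ + ‖T (r n)‖) Filter.atTop
      (nhds (2 * c * ‖x‖ + 0)) := Filter.Tendsto.add tendsto_const_nhds hTr0
  have h := ge_of_tendsto' hlim hub
  calc ‖T x‖ ≤ 2 * c * ‖x‖ + 0 := h
    _ = 2 * c * ‖x‖ := by ring

/-- A quasilinear map `Ω : X ↷ Y` is bounded iff `Dom Ω = X`, iff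
`Ran Ω = Y`; consequently `Ω` is bounded iff `Ω⁻¹` is bounded. -/
theorem stmt8 {X Y S : Type*} [NormedAddCommGroup X] [NormedSpace ℝ X] [CompleteSpace X]
    [NormedAddCommGroup Y] [NormedSpace ℝ Y] [CompleteSpace Y]
    [AddCommGroup S] [Module ℝ S]
    (ι : Y →ₗ[ℝ] S) (hinj : Function.Injective ι)
    (Ω : X → S) (C : ℝ) (hq : IsQL ι Ω C)
    (Oinv : S → X) (K : ℝ) (hK : 0 < K)
    (hhom : ∀ (c : ℝ) (σ : S), Oinv (c • σ) = c • Oinv σ)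
    (hsel : ∀ σ ∈ QRan ι Ω, (σ, Oinv σ) ∈ TwSum ι Ω ∧
      tnorm ι Ω (σ, Oinv σ) ≤ K * ranNorm ι Ω σ) :
    -- Ω bounded ↔ Dom Ω = X
    ((∃ D : ℝ, ∀ x : X, x ∈ QDom ι Ω ∧ Ynorm ι (Ω x) ≤ D * ‖x‖) ↔
      QDom ι Ω = Set.univ) ∧
    -- Ω bounded ↔ Ran Ω = Y
    ((∃ D : ℝ, ∀ x : X, x ∈ QDom ι Ω ∧ Ynorm ι (Ω x) ≤ D * ‖x‖) ↔
      QRan ι Ω = Set.range ι) ∧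
    -- Ω bounded ↔ Ω⁻¹ bounded
    ((∃ D : ℝ, ∀ x : X, x ∈ QDom ι Ω ∧ Ynorm ι (Ω x) ≤ D * ‖x‖) ↔
      (∃ D : ℝ, ∀ σ ∈ QRan ι Ω, Oinv σ ∈ QDom ι Ω ∧
        domNorm ι Ω (Oinv σ) ≤ D * ranNorm ι Ω σ)) := by
  classical
  have hΩ0 : Ω 0 = 0 := by
    have := hq.1 0 0
    simpa using this
  -- key: Dom Ω = X implies boundedness
  have key : QDom ι Ω = Set.univ →
      ∃ D : ℝ, ∀ x : X, x ∈ QDom ι Ω ∧ Ynorm ι (Ω x) ≤ D * ‖x‖ := by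
    intro hdom
    have hdom' : ∀ x : X, ∃ y : Y, ι y = Ω x := by
      intro x
      have hx : x ∈ QDom ι Ω := by rw [hdom]; trivial
      exact hx
    choose T hT using hdom'
    have hzero : ∀ γ : Y, (∀ ε : ℝ, 0 < ε → ∃ x : X, ‖γ - T x‖ + ‖x‖ ≤ ε) → γ = 0 := by
      intro γ hγ
      have hmem : (ι γ) ∈ QRan ι Ω := ⟨0, γ, by rw [hΩ0, sub_zero]⟩
      have hbdd : BddBelow (tnorm ι Ω '' {p : S × X | p.1 = ι γ ∧ p ∈ TwSum ι Ω}) := by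
        refine ⟨0, ?_⟩
        rintro t ⟨p, _, rfl⟩
        exact add_nonneg (Ynorm_nonneg ι _) (norm_nonneg _)
      have hle : ∀ ε : ℝ, 0 < ε → ranNorm ι Ω (ι γ) ≤ ε := by
        intro ε hε
        obtain ⟨x, hx⟩ := hγ ε hε
        have hmem2 : ((ι γ, x) : S × X) ∈ {p : S × X | p.1 = ι γ ∧ p ∈ TwSum ι Ω} :=
          ⟨rfl, ⟨γ - T x, by rw [map_sub, hT]⟩⟩
        have h1 : ranNorm ι Ω (ι γ) ≤ tnorm ι Ω (ι γ, x) := csInf_le hbdd ⟨_, hmem2, rfl⟩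
        have htn : tnorm ι Ω (ι γ, x) = ‖γ - T x‖ + ‖x‖ := by
          have he : (ι γ - Ω x) = ι (γ - T x) := by rw [map_sub, hT]
          show Ynorm ι (ι γ - Ω x) + ‖x‖ = _
          rw [he, Ynorm_iota ι hinj]
        rw [htn] at h1
        linarith
      have hr0 : ranNorm ι Ω (ι γ) = 0 := by
        refine le_antisymm ?_ ?_
        · exact le_of_forall_pos_le_add fun ε hε => by simpa using hle ε hε
        · apply Real.sInf_nonneg
          rintro t ⟨p, _, rfl⟩
          exact add_nonneg (Ynorm_nonneg ι _) (norm_nonneg _)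
      obtain ⟨hts, htb⟩ := hsel (ι γ) hmem
      rw [hr0, mul_zero] at htb
      have htb' : Ynorm ι (ι γ - Ω (Oinv (ι γ))) + ‖Oinv (ι γ)‖ ≤ 0 := htb
      have h1 : 0 ≤ Ynorm ι (ι γ - Ω (Oinv (ι γ))) := Ynorm_nonneg ι _
      have h2 : 0 ≤ ‖Oinv (ι γ)‖ := norm_nonneg _
      have hOz : Oinv (ι γ) = 0 := norm_eq_zero.1 (le_antisymm (by linarith) h2)
      rw [hOz, hΩ0, sub_zero, Ynorm_iota ι hinj] at htb'
      have : ‖γ‖ ≤ 0 := by simpa using htb'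
      exact norm_eq_zero.1 (le_antisymm this (norm_nonneg γ))
    obtain ⟨D, hD⟩ := aux_main ι hinj Ω C hq T hT hzero
    refine ⟨D, fun x => ⟨⟨T x, hT x⟩, ?_⟩⟩
    rw [← hT x, Ynorm_iota ι hinj]
    exact hD x
  have fwd1 : (∃ D : ℝ, ∀ x : X, x ∈ QDom ι Ω ∧ Ynorm ι (Ω x) ≤ D * ‖x‖) →
      QDom ι Ω = Set.univ := by
    rintro ⟨D, h⟩
    exact Set.eq_univ_of_forall fun x => (h x).1
  have hQRmem : ∀ x : X, Ω x ∈ QRan ι Ω := fun x => ⟨x, 0, by rw [map_zero, sub_self]⟩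
  refine ⟨⟨fwd1, key⟩, ⟨?_, ?_⟩, ⟨?_, ?_⟩⟩
  · -- bounded → QRan = range ι
    rintro ⟨D, h⟩
    ext σ
    constructor
    · rintro ⟨x, y, hy⟩
      have hy' : ι y = σ - Ω x := hy
      obtain ⟨yx, hyx⟩ := (h x).1
      refine ⟨y + yx, ?_⟩
      rw [map_add, hy', hyx]
      abel
    · rintro ⟨y, rfl⟩
      exact ⟨0, y, by rw [hΩ0, sub_zero]⟩
  · -- QRan = range ι → bounded
    intro hr
    apply key
    apply Set.eq_univ_of_forall
    intro x
    have hx : Ω x ∈ Set.range ι := by rw [← hr]; exact hQRmem x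
    obtain ⟨y, hy⟩ := hx
    exact ⟨y, hy⟩
  · -- bounded → Oinv bounded
    rintro ⟨D, h⟩
    refine ⟨(1 + max D 0) * K, fun σ hσ => ⟨(h _).1, ?_⟩⟩
    obtain ⟨hts, htb⟩ := hsel σ hσ
    have htb' : Ynorm ι (σ - Ω (Oinv σ)) + ‖Oinv σ‖ ≤ K * ranNorm ι Ω σ := htb
    have h1 : Ynorm ι (Ω (Oinv σ)) ≤ max D 0 * ‖Oinv σ‖ :=
      le_trans (h _).2 (mul_le_mul_of_nonneg_right (le_max_left _ _) (norm_nonneg _))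
    have h2 : 0 ≤ Ynorm ι (σ - Ω (Oinv σ)) := Ynorm_nonneg ι _
    have h3 : ‖Oinv σ‖ ≤ K * ranNorm ι Ω σ := by linarith
    have h4 : (0:ℝ) ≤ 1 + max D 0 := by
      have : (0:ℝ) ≤ max D 0 := le_max_right _ _
      linarith
    show ‖Oinv σ‖ + Ynorm ι (Ω (Oinv σ)) ≤ (1 + max D 0) * K * ranNorm ι Ω σ
    calc ‖Oinv σ‖ + Ynorm ι (Ω (Oinv σ)) ≤ (1 + max D 0) * ‖Oinv σ‖ := by nlinarith
      _ ≤ (1 + max D 0) * (K * ranNorm ι Ω σ) := mul_le_mul_of_nonneg_left h3 h4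
      _ = (1 + max D 0) * K * ranNorm ι Ω σ := by ring
  · -- Oinv bounded → bounded
    rintro ⟨D, h⟩
    apply key
    apply Set.eq_univ_of_forall
    intro x
    have hσ := hQRmem x
    obtain ⟨y', hy'⟩ := (h _ hσ).1
    obtain ⟨y, hy⟩ := (hsel _ hσ).1
    have hy2 : ι y = Ω x - Ω (Oinv (Ω x)) := hy
    refine ⟨y + y', ?_⟩
    rw [map_add, hy2, hy']
    abel
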